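/- Let λ₁,…,λ_s > 0 be further constant weight factors, let σ ≥ 1 and let p ≥ 1 be an integer. Let w_δ be the weight system (with the same G) for the 2s fields (α₁,…,α_s,δ₁,…,δ_s) assigning weight factor κ_j to α_j and λ_j to δ_j, and let w_σ be the weight system for the s fields (α₁,…,α_s) assigning weight factor κ_j + σλ_j to α_j. Let f(α₁,…,α_s) have symmetric coefficient system a with ‖f‖_{w_σ} < ∞, and let δf^{(≥p)}(α₁,…,α_s,δ₁,…,δ_s) be the part of δf(α₁,…,α_s,δ₁,…,δ_s) = f(α₁+δ₁,…,α_s+δ_s) − f(α₁,…,α_s) of degree at least p in (δ₁,…,δ_s); explicitly, δf^{(≥p)} has the symmetric coefficient system δa_p(x⃗₁,…,x⃗_s; y⃗₁,…,y⃗_s) = χ(n(y⃗₁)+⋯+n(y⃗_s) ≥ p) · a(x⃗₁∘y⃗₁,…,x⃗_s∘y⃗_s) · Π_{j=1}^s binom(n(x⃗_j)+n(y⃗_j), n(y⃗_j)). Then ‖δf^{(≥p)}‖_{w_δ} ≤ σ^{−p} ‖f‖_{w_σ}; in particular ‖δf‖_{w_δ} ≤ σ^{−1} ‖f‖_{w_σ}.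 -/

import Mathlib

open scoped BigOperators ENNReal Classical

namespace BFKT

noncomputable section

variable {X : Type*}

/-- Tuples of points of `X` with prescribed multi-length `n`. -/
abbrev Tup (X : Type*) {s : ℕ} (n : Fin s → ℕ) := (j : Fin s) → Fin (n j) → X

/-- Pass from a tuple to the associated family of lists. -/
def toLists {s : ℕ} {n : Fin s → ℕ} (v : Tup X n) : Fin s → List X :=
  fun j => List.ofFn (v j)

/-- The set of points of `X` occurring in one of the lists. -/
def supp [DecidableEq X] {s : ℕ} (l : Fin s → List X) : Finset X :=
  Finset.univ.biUnion fun j => (l j).toFinset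

/-- The weight system with tree-weight `G` and constant weight factors `κ`. -/
def wt [DecidableEq X] (G : Finset X → ℝ) {s : ℕ} (κ : Fin s → ℝ) (l : Fin s → List X) : ℝ :=
  (∏ j, κ j ^ (l j).length) * G (supp l)

/-- A coefficient system is symmetric if it is invariant under permutation of the
components of each of its list arguments. -/
def IsSymm {s : ℕ} (a : (Fin s → List X) → ℂ) : Prop :=
  ∀ (l : Fin s → List X) (j : Fin s) (l' : List X),
    (l j).Perm l' → a (Function.update l j l') = a l

/-- The norm `‖f‖_w` of an analytic function with (symmetric) coefficient system `a`. -/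
def coefNorm [Fintype X] [DecidableEq X] (G : Finset X → ℝ) {s : ℕ}
    (κ : Fin s → ℝ) (a : (Fin s → List X) → ℂ) : ℝ≥0∞ :=
  ENNReal.ofReal (‖(a fun _ => [])‖) +
  ∑' n : Fin s → ℕ,
    if 1 ≤ ∑ j, n j then
      ⨆ (x : X) (j : Fin s) (_ : n j ≠ 0) (i : Fin (n j)),
        ∑ v : Tup X n,
          if v j i = x then
            ENNReal.ofReal (‖a (toLists v)‖ * wt G κ (toLists v))
          else 0
    else 0

/-- `A` is an `s`-field map kernel: it vanishes on the empty tuple. -/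
def IsKernel {s : ℕ} (A : X → (Fin s → List X) → ℂ) : Prop :=
  ∀ x, A x (fun _ => []) = 0

/-- The `L` part of the field map kernel norm. -/
def kerL [Fintype X] [DecidableEq X] (G : Finset X → ℝ) {s : ℕ} (κ : Fin s → ℝ)
    (A : X → (Fin s → List X) → ℂ) (n : Fin s → ℕ) : ℝ≥0∞ :=
  ⨆ x : X, ∑ v : Tup X n,
    ENNReal.ofReal (‖A x (toLists v)‖ * (∏ j, κ j ^ n j)
      * G (insert x (supp (toLists v))))

/-- The `R` part of the field map kernel norm. -/
def kerR [Fintype X] [DecidableEq X] (G : Finset X → ℝ) {s : ℕ} (κ : Fin s → ℝ)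
    (A : X → (Fin s → List X) → ℂ) (n : Fin s → ℕ) : ℝ≥0∞ :=
  ⨆ (x' : X) (j : Fin s) (_ : n j ≠ 0) (i : Fin (n j)),
    ∑ x : X, ∑ v : Tup X n,
      if v j i = x' then
        ENNReal.ofReal (‖A x (toLists v)‖ * (∏ j', κ j' ^ n j')
          * G (insert x (supp (toLists v))))
      else 0

/-- The norm `⦀A⦀_w` of an `s`-field map kernel. -/
def kerNorm [Fintype X] [DecidableEq X] (G : Finset X → ℝ) {s : ℕ} (κ : Fin s → ℝ)
    (A : X → (Fin s → List X) → ℂ) : ℝ≥0∞ :=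
  ∑' n : Fin s → ℕ, if 1 ≤ ∑ j, n j then max (kerL G κ A n) (kerR G κ A n) else 0

/-- The field obtained by applying the field map with kernel `A` to the fields `α`. -/
def fmApply [Fintype X] {s : ℕ} (A : X → (Fin s → List X) → ℂ)
    (α : Fin s → X → ℂ) (x : X) : ℂ :=
  ∑' p : Σ n : Fin s → ℕ, Tup X n, A x (toLists p.2) * ∏ j, ∏ i, α j (p.2 j i)

/-- The value of the analytic function with coefficient system `a` at the fields `α`. -/
def fnApply [Fintype X] {s : ℕ} (a : (Fin s → List X) → ℂ)
    (α : Fin s → X → ℂ) : ℂ :=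
  ∑' p : Σ n : Fin s → ℕ, Tup X n, a (toLists p.2) * ∏ j, ∏ i, α j (p.2 j i)

/-- The `L^p` norm (for `0 < p ≤ ∞`) of a field on the finite set `X`. -/
def lpNorm [Fintype X] (p : ℝ≥0∞) (α : X → ℂ) : ℝ :=
  if p = ∞ then ⨆ x, ‖α x‖
  else (∑ x, ‖α x‖ ^ p.toReal) ^ (1 / p.toReal)

/-- Symmetrization of a coefficient system. -/
def symmetrize {s : ℕ} (a : (Fin s → List X) → ℂ) : (Fin s → List X) → ℂ :=
  fun l =>
    (((∏ j, Nat.factorial (l j).length : ℕ) : ℂ))⁻¹ *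
      ∑ e : (j : Fin s) → Equiv.Perm (Fin (l j).length),
        a fun j => List.ofFn fun i => (l j).get (e j i)

/-- Ordered concatenation of the pieces `q (j,k)`, in lexicographic order of `(j,k)`. -/
def concatPieces {r : ℕ} (m : Fin r → ℕ) (q : (Σ j : Fin r, Fin (m j)) → List X) : List X :=
  ((List.finRange r).map fun j => (List.ofFn fun k : Fin (m j) => q ⟨j, k⟩).flatten).flatten

/-- The coefficient system obtained by formally substituting the field map kernels `A j`
into the coefficient system `a` of a function of `r` fields. -/
def substCoef [Fintype X] {r s : ℕ} (a : (Fin r → List X) → ℂ)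
    (A : Fin r → X → (Fin s → List X) → ℂ) : (Fin s → List X) → ℂ :=
  fun l =>
    ∑' m : Fin r → ℕ,
      ∑ y : Tup X m,
        a (toLists y) *
          ∑' q : (i : Fin s) → (Σ j : Fin r, Fin (m j)) → List X,
            if ∀ i, concatPieces m (q i) = l i then
              ∏ j, ∏ k, A j (y j k) (fun i => q i ⟨j, k⟩)
            else 0

/-- The kernel obtained by formally substituting the field map kernels `A j`
into the `r`-field map kernel `B`. -/
def substKer [Fintype X] {r s : ℕ} (B : X → (Fin r → List X) → ℂ)
    (A : Fin r → X → (Fin s → List X) → ℂ) : X → (Fin s → List X) → ℂ :=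
  fun x l => substCoef (B x) A l

/-- Total length of the last `r` list arguments of an `(s+r)`-field map kernel argument. -/
def lastLen {X : Type*} {s r : ℕ} (l : Fin (s + r) → List X) : ℕ :=
  ∑ j : Fin r, (l (Fin.natAdd s j)).length

/-- `B` has minimum degree at least `d` in its last `r` arguments. -/
def MinDeg {s r : ℕ} (B : X → (Fin (s + r) → List X) → ℂ) (d : ℕ) : Prop :=
  ∀ x l, lastLen (s := s) (r := r) l < d → B x l = 0

/-- `B` has maximum degree at most `d` in its last `r` arguments. -/
def MaxDeg {s r : ℕ} (B : X → (Fin (s + r) → List X) → ℂ) (d : ℕ) : Prop :=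
  ∀ x l, d < lastLen (s := s) (r := r) l → B x l = 0

/-- The restriction `B_{n_{s+1},…,n_{s+r}}`. -/
def restrictDeg {s r : ℕ} (B : X → (Fin (s + r) → List X) → ℂ) (n : Fin r → ℕ) :
    X → (Fin (s + r) → List X) → ℂ :=
  fun x l => if ∀ j, (l (Fin.natAdd s j)).length = n j then B x l else 0

/-- The primed norm `⦀B⦀'_{w_{κ,λ}}`. -/
def kerNorm' [Fintype X] [DecidableEq X] (G : Finset X → ℝ) {s r : ℕ}
    (kl : Fin (s + r) → ℝ) (B : X → (Fin (s + r) → List X) → ℂ) : ℝ≥0∞ :=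
  ∑' n : Fin r → ℕ, (∑ j, n j : ℕ) * kerNorm G kl (restrictDeg B n)

/-- The norm of an `r`-tuple of `s`-field maps, as element of the Banach space `𝓑`. -/
def tupleNorm [Fintype X] [DecidableEq X] (G : Finset X → ℝ) {s r : ℕ}
    (κ : Fin s → ℝ) (lam : Fin r → ℝ)
    (Γ : Fin r → X → (Fin s → List X) → ℂ) : ℝ≥0∞ :=
  ⨆ j, kerNorm G κ (Γ j) / ENNReal.ofReal (lam j)

/-- The kernel of the coordinate field map `(α₁,…,α_s) ↦ α_i`. -/
def projKer [DecidableEq X] {s : ℕ} (i : Fin s) : X → (Fin s → List X) → ℂ :=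
  fun x l => if l = Function.update (fun _ => ([] : List X)) i [x] then 1 else 0

/-- The family of maps substituted into an `(s+r)`-field map when composing with
an `r`-tuple `Γ` of `s`-field maps: the first `s` arguments are left alone. -/
def extendMaps [DecidableEq X] {s r : ℕ}
    (Γ : Fin r → X → (Fin s → List X) → ℂ) :
    Fin (s + r) → X → (Fin s → List X) → ℂ :=
  Fin.addCases (fun i => projKer i) Γ

/-- The kernel of the `s`-field map `B̃(Γ⃗)(α⃗) = B(α⃗, Γ⃗(α⃗))`. -/
def tildeKer [Fintype X] [DecidableEq X] {s r : ℕ}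
    (B : X → (Fin (s + r) → List X) → ℂ)
    (Γ : Fin r → X → (Fin s → List X) → ℂ) : X → (Fin s → List X) → ℂ :=
  substKer B (extendMaps Γ)

end

/-- The symmetric coefficient system of the part `δf^{(≥p)}` of
`f(α₁+δ₁,…,α_s+δ_s) − f(α₁,…,α_s)` of degree at least `p` in `(δ₁,…,δ_s)`:
the first `s` slots are the `α`-arguments, the last `s` slots the `δ`-arguments. -/
def deltaCoef {X : Type*} {s : ℕ} (p : ℕ) (a : (Fin s → List X) → ℂ) :
    (Fin (s + s) → List X) → ℂ :=
  fun l =>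
    if p ≤ ∑ j : Fin s, (l (Fin.natAdd s j)).length then
      a (fun j => l (Fin.castAdd s j) ++ l (Fin.natAdd s j)) *
        ∏ j : Fin s,
          (Nat.choose ((l (Fin.castAdd s j)).length + (l (Fin.natAdd s j)).length)
            ((l (Fin.natAdd s j)).length) : ℂ)
    else 0

/-!
Expanding `f(α + δ)` binomially, the coefficient of `δf^{(≥p)}` at `(x⃗, y⃗)` is `a(x⃗ ∘ y⃗)`
times a product of binomial coefficients, and pinning a point of `x⃗` or of `y⃗` pins the
same point of `x⃗ ∘ y⃗`. With `n(x⃗_j) = N_j - k_j` and `n(y⃗_j) = k_j`, the weight factor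
`κ^{N-k} λ^k = σ^{-|k|} κ^{N-k} (σλ)^k` is at most `σ^{-p} κ^{N-k} (σλ)^k` since `|k| ≥ p`,
and summing `binom(N, k) κ^{N-k} (σλ)^k` over `k` gives `(κ + σλ)^N` by the binomial theorem.
-/

section Concatenation

variable {X : Type*} {s : ℕ}

def mergeLen (n : Fin (s + s) → ℕ) (j : Fin s) : ℕ :=
  n (Fin.castAdd s j) + n (Fin.natAdd s j)

/-- Concatenation `x⃗_j ∘ y⃗_j` of the tuples in slots `j` and `s + j`, for every `j`. -/
def mergeTup {n : Fin (s + s) → ℕ} : Tup X n ≃ Tup X (mergeLen n) where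
  toFun v j := Fin.append (v (Fin.castAdd s j)) (v (Fin.natAdd s j))
  invFun u := Fin.addCases (motive := fun J => Fin (n J) → X)
    (fun j i => u j (Fin.castAdd _ i)) (fun j i => u j (Fin.natAdd _ i))
  left_inv v := by
    funext J
    induction J using Fin.addCases <;> simp
  right_inv u := by
    funext j
    simp only [Fin.addCases_left, Fin.addCases_right]
    exact Fin.append_castAdd_natAdd

lemma toLists_mergeTup {n : Fin (s + s) → ℕ} (v : Tup X n) :
    toLists (mergeTup v) = fun j => toLists v (Fin.castAdd s j) ++ toLists v (Fin.natAdd s j) := by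
  funext j
  exact List.ofFn_fin_append _ _

lemma supp_toLists_mergeTup [DecidableEq X] {n : Fin (s + s) → ℕ} (v : Tup X n) :
    supp (toLists (mergeTup v)) = supp (toLists v) := by
  ext x
  simp only [supp, toLists_mergeTup, Finset.mem_biUnion, Finset.mem_univ, true_and,
    List.mem_toFinset, List.mem_append]
  constructor
  · rintro ⟨j, h | h⟩
    exacts [⟨_, h⟩, ⟨_, h⟩]
  · rintro ⟨J, h⟩
    induction J using Fin.addCases with
    | left j => exact ⟨j, Or.inl h⟩
    | right j => exact ⟨j, Or.inr h⟩

lemma injective_mergeLen_natAdd :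
    Function.Injective fun n : Fin (s + s) → ℕ => (mergeLen n, fun j => n (Fin.natAdd s j)) := by
  intro n n' h
  simp only [Prod.mk.injEq, funext_iff, mergeLen] at h
  apply (Fin.appendEquiv s s).symm.injective
  simp only [Fin.appendEquiv_symm_apply, Prod.mk.injEq, funext_iff]
  exact ⟨fun j => by have := h.1 j; have := h.2 j; omega, h.2⟩

lemma deltaCoef_nil {p : ℕ} (a : (Fin s → List X) → ℂ) (hp : 1 ≤ p) :
    deltaCoef p a (fun _ => []) = 0 := by
  simp only [deltaCoef, List.length_nil, Finset.sum_const_zero]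
  rw [if_neg (by omega)]

lemma deltaCoef_toLists {p : ℕ} (a : (Fin s → List X) → ℂ) {n : Fin (s + s) → ℕ}
    (hp : p ≤ ∑ j, n (Fin.natAdd s j)) (v : Tup X n) :
    deltaCoef p a (toLists v) =
      a (toLists (mergeTup v)) * ∏ j, ((mergeLen n j).choose (n (Fin.natAdd s j)) : ℂ) := by
  simp only [deltaCoef, toLists_mergeTup, mergeLen, toLists, List.length_ofFn, if_pos hp]

lemma deltaCoef_toLists_of_lt {p : ℕ} (a : (Fin s → List X) → ℂ) {n : Fin (s + s) → ℕ}
    (hp : ∑ j, n (Fin.natAdd s j) < p) (v : Tup X n) : deltaCoef p a (toLists v) = 0 := by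
  simp only [deltaCoef, toLists, List.length_ofFn, if_neg (not_le.2 hp)]

lemma prod_append_pow {M : Type*} [CommMonoid M] {m k : ℕ} (κ : Fin m → M) (lam : Fin k → M)
    (n : Fin (m + k) → ℕ) :
    ∏ J, Fin.append κ lam J ^ n J =
      (∏ j, κ j ^ n (Fin.castAdd k j)) * ∏ j, lam j ^ n (Fin.natAdd m j) := by
  simp [Fin.prod_univ_add]

end Concatenation

section PinnedNorm

variable {X : Type*} [Fintype X] [DecidableEq X] {s : ℕ} (G : Finset X → ℝ)

/-- The weight factors `κ^N` of `‖·‖_w` are constant on `Tup X N` and are left out. -/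
noncomputable def pinnedSum (a : (Fin s → List X) → ℂ) (N : Fin s → ℕ) (x : X) (j : Fin s)
    (i : Fin (N j)) : ℝ≥0∞ :=
  ∑ u : Tup X N, if u j i = x then ENNReal.ofReal (‖a (toLists u)‖ * G (supp (toLists u))) else 0

noncomputable def pinnedNorm (a : (Fin s → List X) → ℂ) (N : Fin s → ℕ) : ℝ≥0∞ :=
  ⨆ (x : X) (j : Fin s) (_ : N j ≠ 0) (i : Fin (N j)), pinnedSum G a N x j i

lemma coefNorm_eq_add_tsum_pinnedNorm (κ : Fin s → ℝ) (hκ : ∀ j, 0 ≤ κ j)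
    (a : (Fin s → List X) → ℂ) :
    coefNorm G κ a = ENNReal.ofReal ‖a fun _ => []‖ +
      ∑' N : Fin s → ℕ,
        if 1 ≤ ∑ j, N j then ENNReal.ofReal (∏ j, κ j ^ N j) * pinnedNorm G a N else 0 := by
  have hκN : ∀ N : Fin s → ℕ, 0 ≤ ∏ j, κ j ^ N j := fun N =>
    Finset.prod_nonneg fun j _ => pow_nonneg (hκ j) _
  simp only [coefNorm, pinnedNorm, pinnedSum, ENNReal.mul_iSup, Finset.mul_sum, mul_ite, mul_zero,
    ← ENNReal.ofReal_mul (hκN _), wt, toLists, List.length_ofFn, mul_left_comm]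

end PinnedNorm

section DeltaCoef

variable {X : Type*} [Fintype X] [DecidableEq X] {s : ℕ} (G : Finset X → ℝ) {p : ℕ}
  (a : (Fin s → List X) → ℂ)

lemma pinnedSum_le_pinnedNorm {N : Fin s → ℕ} (x : X) (j : Fin s) (i : Fin (N j)) :
    pinnedSum G a N x j i ≤ pinnedNorm G a N :=
  le_iSup_of_le x <| le_iSup_of_le j <| le_iSup_of_le i.pos.ne' <| le_iSup_of_le i le_rfl

lemma pinnedSum_deltaCoef {n : Fin (s + s) → ℕ} (hp : p ≤ ∑ j, n (Fin.natAdd s j))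
    (x : X) {J : Fin (s + s)} (i : Fin (n J)) {j : Fin s} (i' : Fin (mergeLen n j))
    (hpin : ∀ v : Tup X n, mergeTup v j i' = v J i) :
    pinnedSum G (deltaCoef p a) n x J i =
      ENNReal.ofReal (∏ j, ((mergeLen n j).choose (n (Fin.natAdd s j)) : ℝ)) *
        pinnedSum G a (mergeLen n) x j i' := by
  rw [pinnedSum, pinnedSum, Finset.mul_sum]
  refine Fintype.sum_equiv mergeTup _ _ fun v => ?_
  have hchoose : ‖∏ j, ((mergeLen n j).choose (n (Fin.natAdd s j)) : ℂ)‖ =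
      ∏ j, ((mergeLen n j).choose (n (Fin.natAdd s j)) : ℝ) := by
    rw [← Nat.cast_prod, Complex.norm_natCast, Nat.cast_prod]
  rw [hpin, deltaCoef_toLists a hp, norm_mul, hchoose, supp_toLists_mergeTup]
  split_ifs
  · rw [← ENNReal.ofReal_mul (by positivity)]
    congr 1
    ring
  · rw [mul_zero]

lemma pinnedNorm_deltaCoef_le {n : Fin (s + s) → ℕ} (hp : p ≤ ∑ j, n (Fin.natAdd s j)) :
    pinnedNorm G (deltaCoef p a) n ≤
      ENNReal.ofReal (∏ j, ((mergeLen n j).choose (n (Fin.natAdd s j)) : ℝ)) *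
        pinnedNorm G a (mergeLen n) := by
  refine iSup_le fun x => iSup_le fun J => iSup_le fun _ => iSup_le fun i => ?_
  induction J using Fin.addCases with
  | left j =>
    rw [pinnedSum_deltaCoef G a hp x i (Fin.castAdd _ i) fun v => Fin.append_left _ _ i]
    gcongr
    exact pinnedSum_le_pinnedNorm G a x j _
  | right j =>
    rw [pinnedSum_deltaCoef G a hp x i (Fin.natAdd _ i) fun v => Fin.append_right _ _ i]
    gcongr
    exact pinnedSum_le_pinnedNorm G a x j _

lemma pinnedNorm_deltaCoef_of_lt {n : Fin (s + s) → ℕ} (hp : ∑ j, n (Fin.natAdd s j) < p) :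
    pinnedNorm G (deltaCoef p a) n = 0 := by
  simp [pinnedNorm, pinnedSum, deltaCoef_toLists_of_lt a hp]

end DeltaCoef

lemma prod_mul_pow_le_inv_pow_mul {s p : ℕ} {σ : ℝ} (hσ : 1 ≤ σ) (d lam : Fin s → ℝ)
    (hd : ∀ j, 0 ≤ d j) (hlam : ∀ j, 0 ≤ lam j) (k : Fin s → ℕ) (hp : p ≤ ∑ j, k j) :
    ∏ j, d j * lam j ^ k j ≤ (σ ^ p)⁻¹ * ∏ j, d j * (σ * lam j) ^ k j := by
  have hscale : ∏ j, d j * (σ * lam j) ^ k j = σ ^ (∑ j, k j) * ∏ j, d j * lam j ^ k j := by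
    rw [← Finset.prod_pow_eq_pow_sum, ← Finset.prod_mul_distrib]
    exact Finset.prod_congr rfl fun j _ => by ring
  rw [hscale, ← mul_assoc]
  refine le_mul_of_one_le_left
    (Finset.prod_nonneg fun j _ => mul_nonneg (hd j) (pow_nonneg (hlam j) _)) ?_
  rw [one_le_inv_mul₀ (by positivity)]
  exact pow_le_pow_right₀ hσ hp

lemma tsum_ofReal_prod_choose_mul_pow {s : ℕ} (N : Fin s → ℕ) (x y : Fin s → ℝ)
    (hx : ∀ j, 0 ≤ x j) (hy : ∀ j, 0 ≤ y j) :
    ∑' k : Fin s → ℕ,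
        ENNReal.ofReal (∏ j, ((N j).choose (k j) : ℝ) * x j ^ (N j - k j) * y j ^ k j)
      = ENNReal.ofReal (∏ j, (x j + y j) ^ N j) := by
  have hvanish : ∀ k ∉ Fintype.piFinset fun j => Finset.range (N j + 1),
      ENNReal.ofReal (∏ j, ((N j).choose (k j) : ℝ) * x j ^ (N j - k j) * y j ^ k j) = 0 := by
    intro k hk
    obtain ⟨j, hj⟩ := not_forall.1 (Fintype.mem_piFinset.not.1 hk)
    rw [Finset.mem_range, not_lt] at hj
    rw [Finset.prod_eq_zero (Finset.mem_univ j) (by simp [Nat.choose_eq_zero_of_lt hj]),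
      ENNReal.ofReal_zero]
  rw [tsum_eq_sum hvanish, ← ENNReal.ofReal_sum_of_nonneg fun k _ => Finset.prod_nonneg
    fun j _ => mul_nonneg (mul_nonneg (Nat.cast_nonneg _) (pow_nonneg (hx j) _))
      (pow_nonneg (hy j) _),
    ← Finset.prod_univ_sum (fun j => Finset.range (N j + 1))
      fun j k => ((N j).choose k : ℝ) * x j ^ (N j - k) * y j ^ k]
  congr 1
  refine Finset.prod_congr rfl fun j _ => ?_
  rw [add_comm (x j), add_pow]
  exact Finset.sum_congr rfl fun k _ => by ring

section Bound

variable {X : Type*} [Fintype X] [DecidableEq X] {s : ℕ} (G : Finset X → ℝ)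
  (a : (Fin s → List X) → ℂ)

/-- The part of the `N`-th summand of `‖f‖_w`, `w` with weight factors `κ + μ`, in which
`k j` of the `N j` points of species `j` carry the factor `μ j`. -/
noncomputable def splitTerm (κ μ : Fin s → ℝ) (N k : Fin s → ℕ) : ℝ≥0∞ :=
  ENNReal.ofReal (∏ j, ((N j).choose (k j) : ℝ) * κ j ^ (N j - k j) * μ j ^ k j) *
    if 1 ≤ ∑ j, N j then pinnedNorm G a N else 0

lemma tsum_splitTerm {κ μ : Fin s → ℝ} (hκ : ∀ j, 0 ≤ κ j) (hμ : ∀ j, 0 ≤ μ j)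
    (N : Fin s → ℕ) :
    ∑' k, splitTerm G a κ μ N k =
      if 1 ≤ ∑ j, N j then ENNReal.ofReal (∏ j, (κ j + μ j) ^ N j) * pinnedNorm G a N
      else 0 := by
  simp only [splitTerm]
  rw [ENNReal.tsum_mul_right, tsum_ofReal_prod_choose_mul_pow N κ μ hκ hμ,
    mul_ite, mul_zero]

lemma term_deltaCoef_le {κ lam : Fin s → ℝ} (hκ : ∀ j, 0 ≤ κ j) (hlam : ∀ j, 0 ≤ lam j)
    {σ : ℝ} (hσ : 1 ≤ σ) (p : ℕ) (n : Fin (s + s) → ℕ) :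
    (if 1 ≤ ∑ J, n J then
        ENNReal.ofReal (∏ J, Fin.append κ lam J ^ n J) * pinnedNorm G (deltaCoef p a) n
      else 0) ≤
      ENNReal.ofReal ((σ ^ p)⁻¹) *
        splitTerm G a κ (fun j => σ * lam j) (mergeLen n) fun j => n (Fin.natAdd s j) := by
  rcases lt_or_ge (∑ j, n (Fin.natAdd s j)) p with hp | hp
  · simp [pinnedNorm_deltaCoef_of_lt G a hp]
  split_ifs with h1
  swap
  · exact zero_le
  have hN : 1 ≤ ∑ j, mergeLen n j := by
    simp only [mergeLen, Finset.sum_add_distrib]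
    rwa [← Fin.sum_univ_add]
  have hsub : ∀ j, mergeLen n j - n (Fin.natAdd s j) = n (Fin.castAdd s j) :=
    fun j => Nat.add_sub_cancel ..
  rw [splitTerm, if_pos hN, prod_append_pow]
  simp only [hsub]
  set m : Fin s → ℕ := fun j => n (Fin.castAdd s j)
  set k : Fin s → ℕ := fun j => n (Fin.natAdd s j)
  set C : Fin s → ℝ := fun j => ((mergeLen n j).choose (k j) : ℝ)
  have hκlam : 0 ≤ (∏ j, κ j ^ m j) * ∏ j, lam j ^ k j :=
    mul_nonneg (Finset.prod_nonneg fun j _ => pow_nonneg (hκ j) _)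
      (Finset.prod_nonneg fun j _ => pow_nonneg (hlam j) _)
  have hσp : 0 ≤ (σ ^ p)⁻¹ := inv_nonneg.2 (pow_nonneg (zero_le_one.trans hσ) p)
  have hweight : ((∏ j, κ j ^ m j) * ∏ j, lam j ^ k j) * ∏ j, C j =
      ∏ j, C j * κ j ^ m j * lam j ^ k j := by
    simp only [Finset.prod_mul_distrib]
    ring
  calc ENNReal.ofReal ((∏ j, κ j ^ m j) * ∏ j, lam j ^ k j) * pinnedNorm G (deltaCoef p a) n
      ≤ ENNReal.ofReal ((∏ j, κ j ^ m j) * ∏ j, lam j ^ k j) *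
          (ENNReal.ofReal (∏ j, C j) * pinnedNorm G a (mergeLen n)) := by
        gcongr
        exact pinnedNorm_deltaCoef_le G a hp
    _ = ENNReal.ofReal (∏ j, C j * κ j ^ m j * lam j ^ k j) * pinnedNorm G a (mergeLen n) := by
        rw [← mul_assoc, ← ENNReal.ofReal_mul hκlam, hweight]
    _ ≤ ENNReal.ofReal ((σ ^ p)⁻¹ * ∏ j, C j * κ j ^ m j * (σ * lam j) ^ k j) *
          pinnedNorm G a (mergeLen n) := by
        gcongr
        exact prod_mul_pow_le_inv_pow_mul hσ _ lam
          (fun j => mul_nonneg (Nat.cast_nonneg _) (pow_nonneg (hκ j) _)) hlam _ hp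
    _ = _ := by
        rw [ENNReal.ofReal_mul hσp, mul_assoc]

end Bound

theorem statement3_general {X : Type*} [Fintype X] [DecidableEq X] {s : ℕ}
    (G : Finset X → ℝ)
    (κ lam : Fin s → ℝ) (hκ : ∀ j, 0 < κ j) (hlam : ∀ j, 0 < lam j)
    (σ : ℝ) (hσ : 1 ≤ σ) (p : ℕ) (hp : 1 ≤ p)
    (a : (Fin s → List X) → ℂ) :
    coefNorm G (Fin.append κ lam) (deltaCoef p a)
      ≤ ENNReal.ofReal ((σ ^ p)⁻¹) * coefNorm G (fun j => κ j + σ * lam j) a := by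
  have hκ₀ : ∀ j, 0 ≤ κ j := fun j => (hκ j).le
  have hσlam : ∀ j, 0 ≤ σ * lam j := fun j => mul_nonneg (zero_le_one.trans hσ) (hlam j).le
  have happend : ∀ J, 0 ≤ Fin.append κ lam J := Fin.addCases
    (fun j => by rw [Fin.append_left]; exact hκ₀ j)
    fun j => by rw [Fin.append_right]; exact (hlam j).le
  calc coefNorm G (Fin.append κ lam) (deltaCoef p a)
      = ∑' n, if 1 ≤ ∑ J, n J then
          ENNReal.ofReal (∏ J, Fin.append κ lam J ^ n J) * pinnedNorm G (deltaCoef p a) n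
        else 0 := by
        rw [coefNorm_eq_add_tsum_pinnedNorm G _ happend, deltaCoef_nil a hp, norm_zero,
          ENNReal.ofReal_zero, zero_add]
    _ ≤ ∑' n : Fin (s + s) → ℕ, ENNReal.ofReal ((σ ^ p)⁻¹) *
          splitTerm G a κ (fun j => σ * lam j) (mergeLen n) fun j => n (Fin.natAdd s j) :=
        ENNReal.tsum_le_tsum fun n => term_deltaCoef_le G a hκ₀ (fun j => (hlam j).le) hσ p n
    _ ≤ ENNReal.ofReal ((σ ^ p)⁻¹) *
          ∑' Nk : (Fin s → ℕ) × (Fin s → ℕ), splitTerm G a κ (fun j => σ * lam j) Nk.1 Nk.2 := by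
        rw [ENNReal.tsum_mul_left]
        gcongr
        exact ENNReal.tsum_comp_le_tsum_of_injective injective_mergeLen_natAdd
          fun Nk => splitTerm G a κ (fun j => σ * lam j) Nk.1 Nk.2
    _ ≤ ENNReal.ofReal ((σ ^ p)⁻¹) * coefNorm G (fun j => κ j + σ * lam j) a := by
        rw [ENNReal.tsum_prod',
          coefNorm_eq_add_tsum_pinnedNorm G _ fun j => add_nonneg (hκ₀ j) (hσlam j)]
        simp only [tsum_splitTerm G a hκ₀ hσlam]
        gcongr
        exact le_add_self

/-- Lemma III.6(a): `‖δf^{(≥p)}‖_{w_δ} ≤ σ^{−p} ‖f‖_{w_σ}`. -/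
theorem statement3 {X : Type*} [Fintype X] [DecidableEq X] [Nonempty X] {s : ℕ}
    (G : Finset X → ℝ)
    (hG1 : ∀ S : Finset X, 1 ≤ G S)
    (hGsing : ∀ S : Finset X, S.card ≤ 1 → G S = 1)
    (hGmono : ∀ S T : Finset X, S ⊆ T → G S ≤ G T)
    (hGmul : ∀ S T : Finset X, (S ∩ T).Nonempty → G (S ∪ T) ≤ G S * G T)
    (κ lam : Fin s → ℝ) (hκ : ∀ j, 0 < κ j) (hlam : ∀ j, 0 < lam j)
    (σ : ℝ) (hσ : 1 ≤ σ) (p : ℕ) (hp : 1 ≤ p)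
    (a : (Fin s → List X) → ℂ) (ha : IsSymm a)
    (hfin : coefNorm G (fun j => κ j + σ * lam j) a < ⊤) :
    coefNorm G (Fin.append κ lam) (deltaCoef p a)
      ≤ ENNReal.ofReal ((σ ^ p)⁻¹) * coefNorm G (fun j => κ j + σ * lam j) a :=
  statement3_general G κ lam hκ hlam σ hσ p hp a

end BFKT
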